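/- If P ⊂ ℝ³ is a full-dimensional polytope with Δ(P) > V(P) − F(P) + 3, then for a suitable direction θ there exists a θ-admissible speed vector that is not globally affine (i.e., not of the form (w·x_i + β)_i). -/

import Mathlib

/-- `F` is a facet (2-dimensional face) of `P ⊂ ℝ³`. -/
def IsFacet3 (P F : Set (EuclideanSpace ℝ (Fin 3))) : Prop :=
  IsClosed F ∧ Convex ℝ F ∧ IsExtreme ℝ P F ∧ Module.finrank ℝ (vectorSpan ℝ F) = 2

/-- A speed vector `α` is `θ`-admissible for the polytope with vertices `x i`. -/
def IsAdmissible (V : ℕ) (x : Fin V → EuclideanSpace ℝ (Fin 3))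
    (θ : EuclideanSpace ℝ (Fin 3)) (α : Fin V → ℝ) : Prop :=
  ∀ F : Set (EuclideanSpace ℝ (Fin 3)),
    IsFacet3 (convexHull ℝ (Set.range x)) F → θ ∉ vectorSpan ℝ F →
      ∃ (w : EuclideanSpace ℝ (Fin 3)) (β : ℝ),
        ∀ i, x i ∈ F → α i = (inner ℝ w (x i) : ℝ) + β


namespace NAL

open Module RealInnerProductSpace Finset

noncomputable section

abbrev E3 : Type := EuclideanSpace ℝ (Fin 3)

/-- Affine evaluation map: `(w, β) ↦ (j ↦ ⟪w, y j⟫ + β)`. -/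
def affEval {ι : Type} (y : ι → E3) : (E3 × ℝ) →ₗ[ℝ] (ι → ℝ) where
  toFun wβ := fun j => ⟪wβ.1, y j⟫ + wβ.2
  map_add' a b := by
    funext j
    simp only [Prod.fst_add, Prod.snd_add, inner_add_left, Pi.add_apply]
    ring
  map_smul' c a := by
    funext j
    simp only [Prod.smul_fst, Prod.smul_snd, real_inner_smul_left, smul_eq_mul,
      RingHom.id_apply, Pi.smul_apply]
    ring

lemma affEval_apply {ι : Type} (y : ι → E3) (w : E3) (β : ℝ) (j : ι) :
    affEval y (w, β) j = ⟪w, y j⟫ + β := rfl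

lemma indep_pair {u d e : E3} (hd : d ≠ 0) (h1 : ⟪u, d⟫ = 0) (h2 : ⟪u, e⟫ ≠ 0) :
    LinearIndependent ℝ ![d, e] := by
  rw [LinearIndependent.pair_iff]
  intro s t hst
  have h := congrArg (fun z => ⟪u, z⟫) hst
  simp only [inner_add_right, real_inner_smul_right, inner_zero_right, h1, mul_zero,
    zero_add] at h
  have ht : t = 0 := by
    rcases mul_eq_zero.1 h with h' | h'
    · exact h'
    · exact absurd h' h2
  subst ht
  simp only [zero_smul, add_zero, smul_eq_zero] at hst
  exact ⟨hst.resolve_right hd, rfl⟩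

lemma finrank_span_pair' {d e : E3} (h : LinearIndependent ℝ ![d, e]) :
    finrank ℝ (Submodule.span ℝ ({d, e} : Set E3)) = 2 := by
  have h2 := finrank_span_eq_card h
  have hr : Set.range ![d, e] = ({d, e} : Set E3) := by
    simp [Matrix.range_cons, Matrix.range_empty, Set.pair_comm]
  rw [hr] at h2
  simpa using h2

lemma exists_generic_aux (D : Finset E3) (hD : ∀ d ∈ D, d ≠ 0) :
    ∃ u : E3, ∀ d ∈ D, ⟪u, d⟫ ≠ 0 := by
  classical
  induction D using Finset.induction_on with
  | empty => exact ⟨0, by simp⟩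
  | @insert d D hdD ih =>
    obtain ⟨u, hu⟩ := ih (fun e he => hD e (Finset.mem_insert_of_mem he))
    have hd0 : d ≠ 0 := hD d (Finset.mem_insert_self d D)
    set B : Finset ℝ := (insert d D).image (fun e => - ⟪u, e⟫ / ⟪d, e⟫) with hB
    obtain ⟨t, ht⟩ := B.exists_notMem
    refine ⟨u + t • d, ?_⟩
    intro e he h0
    have hexp : ⟪u, e⟫ + t * ⟪d, e⟫ = 0 := by
      rw [inner_add_left, real_inner_smul_left] at h0
      exact h0
    by_cases hde : ⟪d, e⟫ = 0
    · have he' : e ∈ D := by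
        rcases Finset.mem_insert.1 he with rfl | h'
        · exact absurd hde (inner_self_ne_zero.2 hd0)
        · exact h'
      rw [hde, mul_zero, add_zero] at hexp
      exact hu e he' hexp
    · apply ht
      rw [hB]
      refine Finset.mem_image.2 ⟨e, he, ?_⟩
      rw [div_eq_iff hde]
      linarith

lemma exists_generic {V : ℕ} (x : Fin V → E3) (hinj : Function.Injective x) :
    ∃ u : E3, ∀ i j : Fin V, i ≠ j → ⟪u, x i⟫ ≠ ⟪u, x j⟫ := by
  classical
  set D : Finset E3 := ((Finset.univ ×ˢ Finset.univ : Finset (Fin V × Fin V)).image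
      (fun p => x p.1 - x p.2)).filter (· ≠ 0) with hD
  obtain ⟨u, hu⟩ := exists_generic_aux D (fun d hd => (Finset.mem_filter.1 hd).2)
  refine ⟨u, fun i j hij h => ?_⟩
  have hmem : x i - x j ∈ D := by
    refine Finset.mem_filter.2 ⟨Finset.mem_image.2 ⟨(i, j), by simp, rfl⟩, ?_⟩
    simp only [ne_eq, sub_eq_zero]
    exact fun h' => hij (hinj h')
  apply hu _ hmem
  rw [inner_sub_right]
  linarith

/-- Key extremality lemma: if `g ∈ P` lies in the affine span of a finite set `S` whose
convex hull is an extreme subset of `P`, then `g` lies in that convex hull. -/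
lemma cent_mem {P : Set E3} {S : Finset E3} (hS : S.Nonempty)
    (hex : IsExtreme ℝ P (convexHull ℝ (S : Set E3)))
    {g : E3} (hgP : g ∈ P) (hg : g ∈ affineSpan ℝ (S : Set E3)) :
    g ∈ convexHull ℝ (S : Set E3) := by
  classical
  have hrange : (Set.range fun a : {a // a ∈ S} => (a : E3)) = (S : Set E3) := by
    ext y
    simp [Set.mem_range, Subtype.exists]
  have hg' : g ∈ affineSpan ℝ (Set.range (fun a : {a // a ∈ S} => (a : E3))) := by
    rwa [hrange]
  obtain ⟨s, w, hw, hrep⟩ := eq_affineCombination_of_mem_affineSpan hg'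
  set w' : {a // a ∈ S} → ℝ := fun a => if a ∈ s then w a else 0 with hw'
  have hw'sum : ∑ a : {a // a ∈ S}, w' a = 1 := by
    rw [← Finset.sum_subset (Finset.subset_univ s) (fun a _ has => by simp [hw', has])]
    rw [← hw]
    exact Finset.sum_congr rfl (fun a ha => by simp [hw', ha])
  have hrep' : g = ∑ a : {a // a ∈ S}, w' a • (a : E3) := by
    rw [hrep, Finset.affineCombination_eq_linear_combination _ _ _ hw]
    rw [← Finset.sum_subset (Finset.subset_univ s)
      (fun a _ has => by simp [hw', has])]
    exact Finset.sum_congr rfl (fun a ha => by simp [hw', ha])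
  set N : ℕ := S.card with hNdef
  have hcard : Fintype.card {a // a ∈ S} = N := Fintype.card_coe S
  have hNpos : (0:ℝ) < N := by exact_mod_cast Finset.card_pos.2 hS
  have hN0 : (N:ℝ) ≠ 0 := ne_of_gt hNpos
  set z : E3 := ∑ a : {a // a ∈ S}, ((N:ℝ)⁻¹) • (a : E3) with hz
  have hsum1 : ∑ _a : {a // a ∈ S}, (N:ℝ)⁻¹ = 1 := by
    rw [Finset.sum_const, Finset.card_univ, hcard, nsmul_eq_mul]
    field_simp
  have hzhull : z ∈ convexHull ℝ (S : Set E3) := by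
    have hmem := Finset.centerMass_mem_convexHull (Finset.univ : Finset {a // a ∈ S})
      (w := fun _ => (N:ℝ)⁻¹) (fun _ _ => by positivity) (by rw [hsum1]; norm_num)
      (z := fun a => (a : E3)) (fun a _ => a.2)
    rwa [Finset.centerMass_eq_of_sum_1 _ _ hsum1] at hmem
  set A : ℝ := ∑ a : {a // a ∈ S}, |w' a| with hA
  have hA0 : 0 ≤ A := Finset.sum_nonneg (fun a _ => abs_nonneg _)
  set t : ℝ := 1 / (1 + (N:ℝ) * A) with htdef
  have hden : (0:ℝ) < 1 + (N:ℝ) * A := by positivity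
  have ht : 0 < t := by rw [htdef]; positivity
  have h1tpos : (0:ℝ) < 1 + t := by linarith
  have h1t : (1:ℝ) + t ≠ 0 := ne_of_gt h1tpos
  set μ : {a // a ∈ S} → ℝ := fun a => (1 + t)/(N:ℝ) - t * w' a with hμ
  have hμ0 : ∀ a, 0 ≤ μ a := by
    intro a
    have hwA : w' a ≤ A :=
      le_trans (le_abs_self _) (Finset.single_le_sum (f := fun a => |w' a|)
        (fun _ _ => abs_nonneg _) (Finset.mem_univ a))
    have h2 : (N:ℝ) * A * t ≤ 1 := by
      rw [htdef, mul_one_div, div_le_one hden]; linarith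
    have h3 : (N:ℝ) * t * w' a ≤ (N:ℝ) * t * A := by
      apply mul_le_mul_of_nonneg_left hwA
      positivity
    have heq1 : (N:ℝ) * t * A = (N:ℝ) * A * t := by ring
    have h3' : (N:ℝ) * t * w' a ≤ 1 := by linarith
    have h4 : (N:ℝ) * (t * w' a) ≤ 1 + t := by
      have heq2 : (N:ℝ) * (t * w' a) = (N:ℝ) * t * w' a := by ring
      linarith
    have h5 : t * w' a ≤ (1 + t) / (N:ℝ) := by
      rw [le_div_iff₀ hNpos]
      have heq3 : t * w' a * (N:ℝ) = (N:ℝ) * (t * w' a) := by ring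
      linarith
    simp only [hμ, sub_nonneg]
    exact h5
  have hμsum : ∑ a : {a // a ∈ S}, μ a = 1 := by
    simp only [hμ]
    rw [Finset.sum_sub_distrib, ← Finset.mul_sum, hw'sum, Finset.sum_const,
      Finset.card_univ, hcard, nsmul_eq_mul, mul_one]
    field_simp
    ring
  set z' : E3 := ∑ a : {a // a ∈ S}, μ a • (a : E3) with hz'def
  have hz'hull : z' ∈ convexHull ℝ (S : Set E3) := by
    have hmem := Finset.centerMass_mem_convexHull (Finset.univ : Finset {a // a ∈ S})
      (w := μ) (fun a _ => hμ0 a) (by rw [hμsum]; norm_num)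
      (z := fun a => (a : E3)) (fun a _ => a.2)
    rwa [Finset.centerMass_eq_of_sum_1 _ _ hμsum] at hmem
  have hz'eq : z' = (1 + t) • z - t • g := by
    rw [hz'def, hz, hrep', Finset.smul_sum, Finset.smul_sum, ← Finset.sum_sub_distrib]
    refine Finset.sum_congr rfl (fun a _ => ?_)
    rw [smul_smul, smul_smul, ← sub_smul]
    simp [hμ, div_eq_mul_inv]
  have hzseg : z ∈ openSegment ℝ g z' := by
    refine ⟨t/(1+t), 1/(1+t), div_pos ht h1tpos, div_pos one_pos h1tpos, ?_, ?_⟩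
    · rw [← add_div, add_comm]
      exact div_self h1t
    · rw [hz'eq]
      match_scalars
      · field_simp
        ring
      · field_simp
  exact hex.2 hgP (hex.1 hz'hull) hzhull hzseg

end

end NAL

namespace NAL

open Module RealInnerProductSpace

noncomputable section

variable {V : ℕ} {x : Fin V → E3}

open Classical in
/-- Indices of the vertices lying on `F`. -/
def vertsOf (x : Fin V → E3) (F : Set E3) : Finset (Fin V) :=
  Finset.univ.filter (fun i => x i ∈ F)

lemma mem_vertsOf {F : Set E3} {i : Fin V} : i ∈ vertsOf x F ↔ x i ∈ F := by
  classical
  simp [vertsOf]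

lemma image_vertsOf (F : Set E3) :
    F ∩ Set.range x = x '' ↑(vertsOf x F) := by
  ext z
  constructor
  · rintro ⟨hzF, i, rfl⟩
    exact ⟨i, by simpa [Finset.mem_coe, mem_vertsOf] using hzF, rfl⟩
  · rintro ⟨i, hi, rfl⟩
    rw [Finset.mem_coe] at hi
    exact ⟨mem_vertsOf.1 hi, ⟨i, rfl⟩⟩

lemma ncard_inter (hinj : Function.Injective x) (F : Set E3) :
    Nat.card (F ∩ Set.range x : Set E3) = (vertsOf x F).card := by
  rw [Nat.card_coe_set_eq, image_vertsOf F, Set.ncard_image_of_injective _ hinj,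
    Set.ncard_coe_finset]

lemma facet_hull (hvert : Set.extremePoints ℝ (convexHull ℝ (Set.range x)) = Set.range x)
    {F : Set E3} (hF : IsFacet3 (convexHull ℝ (Set.range x)) F) :
    F = convexHull ℝ (F ∩ Set.range x) := by
  have hPc : IsCompact (convexHull ℝ (Set.range x)) :=
    (Set.finite_range x).isCompact_convexHull ℝ
  have hFP : F ⊆ convexHull ℝ (Set.range x) := hF.2.2.1.1
  have hFc : IsCompact F := hPc.of_isClosed_subset hF.1 hFP
  have hKM := closure_convexHull_extremePoints hFc hF.2.1
  have hsub : Set.extremePoints ℝ F ⊆ F ∩ Set.range x := fun z hz =>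
    ⟨extremePoints_subset hz, hvert ▸ hF.2.2.1.extremePoints_subset_extremePoints hz⟩
  have hfin : (F ∩ Set.range x).Finite := (Set.finite_range x).subset Set.inter_subset_right
  have hclosed : IsClosed (convexHull ℝ (F ∩ Set.range x)) :=
    (hfin.isCompact_convexHull ℝ).isClosed
  apply Set.Subset.antisymm
  · calc F = closure (convexHull ℝ (Set.extremePoints ℝ F)) := hKM.symm
      _ ⊆ closure (convexHull ℝ (F ∩ Set.range x)) := closure_mono (convexHull_mono hsub)
      _ = convexHull ℝ (F ∩ Set.range x) := hclosed.closure_eq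
  · conv_rhs => rw [← hF.2.1.convexHull_eq]
    exact convexHull_mono Set.inter_subset_left

lemma facet_vectorSpan (hvert : Set.extremePoints ℝ (convexHull ℝ (Set.range x)) = Set.range x)
    {F : Set E3} (hF : IsFacet3 (convexHull ℝ (Set.range x)) F) :
    vectorSpan ℝ (F ∩ Set.range x) = vectorSpan ℝ F := by
  conv_rhs => rw [facet_hull hvert hF]
  rw [← direction_affineSpan, ← direction_affineSpan, affineSpan_convexHull]

lemma three_le_verts (hinj : Function.Injective x)
    (hvert : Set.extremePoints ℝ (convexHull ℝ (Set.range x)) = Set.range x)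
    {F : Set E3} (hF : IsFacet3 (convexHull ℝ (Set.range x)) F) :
    3 ≤ (vertsOf x F).card := by
  classical
  by_contra hlt
  push_neg at hlt
  have h2 : finrank ℝ (vectorSpan ℝ (F ∩ Set.range x)) = 2 := by
    rw [facet_vectorSpan hvert hF]
    exact hF.2.2.2
  have himg : Set.range (fun a : {a // a ∈ vertsOf x F} => x a) = F ∩ Set.range x := by
    rw [image_vertsOf (x := x) F]
    ext z
    simp [Set.mem_range, Subtype.exists, Finset.mem_coe]
  cases hn : (vertsOf x F).card with
  | zero =>
    have hemp : vertsOf x F = ∅ := Finset.card_eq_zero.1 hn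
    have hempty : F ∩ Set.range x = ∅ := by
      rw [image_vertsOf (x := x) F, hemp]; simp
    rw [hempty, vectorSpan_empty] at h2
    simp at h2
  | succ n =>
    have hcard : Fintype.card {a // a ∈ vertsOf x F} = n + 1 := by
      rw [Fintype.card_coe]; exact hn
    have hle := finrank_vectorSpan_range_le ℝ (fun a : {a // a ∈ vertsOf x F} => x a) hcard
    rw [himg, h2] at hle
    omega

lemma facet_support (hinj : Function.Injective x)
    (hvert : Set.extremePoints ℝ (convexHull ℝ (Set.range x)) = Set.range x)
    {F : Set E3} (hF : IsFacet3 (convexHull ℝ (Set.range x)) F) :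
    ∃ (n : E3) (c : ℝ), (∀ d ∈ vectorSpan ℝ F, ⟪n, d⟫ = 0) ∧
      (∀ p ∈ convexHull ℝ (Set.range x), ⟪n, p⟫ ≤ c) ∧ (∀ z ∈ F, ⟪n, z⟫ = c) ∧
      (∀ g ∈ convexHull ℝ (Set.range x), ⟪n, g⟫ = c → g ∈ F) := by
  classical
  have hTrank : finrank ℝ (vectorSpan ℝ F) = 2 := hF.2.2.2
  have hdim : finrank ℝ E3 = 3 := by simp [finrank_euclideanSpace]
  have horthrank : finrank ℝ ((vectorSpan ℝ F)ᗮ) = 1 := by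
    have := Submodule.finrank_add_finrank_orthogonal (K := vectorSpan ℝ F)
    omega
  obtain ⟨n, hnT, hn0⟩ := Submodule.exists_mem_ne_zero_of_ne_bot
    (p := (vectorSpan ℝ F)ᗮ) (by
      intro hbot
      rw [hbot] at horthrank
      simp at horthrank)
  set S : Finset E3 := (vertsOf x F).image x with hSdef
  have hScoe : (S : Set E3) = F ∩ Set.range x := by
    rw [hSdef, Finset.coe_image, ← image_vertsOf (x := x) F]
  have hhull : F = convexHull ℝ (S : Set E3) := by
    rw [hScoe]; exact facet_hull hvert hF
  have hSne : S.Nonempty := by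
    apply Finset.Nonempty.image
    rw [← Finset.card_pos]
    have := three_le_verts hinj hvert hF
    omega
  obtain ⟨v₀, hv₀S⟩ := id hSne
  have hv₀F : v₀ ∈ F := by
    rw [hhull]; exact subset_convexHull ℝ _ hv₀S
  have horth : ∀ d ∈ vectorSpan ℝ F, ⟪n, d⟫ = 0 := by
    intro d hd
    rw [real_inner_comm]
    exact (Submodule.mem_orthogonal _ n).1 hnT d hd
  have heq : ∀ z ∈ F, ⟪n, z⟫ = ⟪n, v₀⟫ := by
    intro z hz
    have hd : z - v₀ ∈ vectorSpan ℝ F := vsub_mem_vectorSpan ℝ hz hv₀F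
    have h0 := horth _ hd
    rw [inner_sub_right] at h0
    linarith
  have hTle : vectorSpan ℝ F ≤ (Submodule.span ℝ {n})ᗮ := by
    intro d hd
    rw [Submodule.mem_orthogonal_singleton_iff_inner_right]
    exact horth d hd
  have hspanrank : finrank ℝ ((Submodule.span ℝ {n})ᗮ) = 2 := by
    have h1 : finrank ℝ (Submodule.span ℝ ({n} : Set E3)) = 1 := finrank_span_singleton hn0
    have := Submodule.finrank_add_finrank_orthogonal (K := Submodule.span ℝ ({n} : Set E3))
    omega
  have hTeq : vectorSpan ℝ F = (Submodule.span ℝ {n})ᗮ :=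
    Submodule.eq_of_le_of_finrank_le hTle (by rw [hspanrank, hTrank])
  have haff : ∀ g : E3, ⟪n, g⟫ = ⟪n, v₀⟫ → g ∈ affineSpan ℝ (S : Set E3) := by
    intro g hg
    have hd : g - v₀ ∈ vectorSpan ℝ F := by
      rw [hTeq, Submodule.mem_orthogonal_singleton_iff_inner_right, inner_sub_right, hg]
      ring
    have hdir : g - v₀ ∈ (affineSpan ℝ (S : Set E3)).direction := by
      rw [direction_affineSpan, hScoe, facet_vectorSpan hvert hF]
      exact hd
    have hmem := AffineSubspace.vadd_mem_of_mem_direction hdir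
      (subset_affineSpan ℝ _ hv₀S)
    simpa [vadd_eq_add, sub_add_cancel] using hmem
  have hface0 : ∀ g ∈ convexHull ℝ (Set.range x), ⟪n, g⟫ = ⟪n, v₀⟫ → g ∈ F := by
    intro g hgP hg
    rw [hhull]
    exact cent_mem hSne (hhull ▸ hF.2.2.1) hgP (haff g hg)
  have hside : (∀ p ∈ convexHull ℝ (Set.range x), ⟪n, p⟫ ≤ ⟪n, v₀⟫) ∨
      (∀ p ∈ convexHull ℝ (Set.range x), ⟪n, v₀⟫ ≤ ⟪n, p⟫) := by
    by_contra hcon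
    push_neg at hcon
    obtain ⟨⟨p, hpP, hp⟩, ⟨p', hp'P, hp'⟩⟩ := hcon
    set s : ℝ := (⟪n, v₀⟫ - ⟪n, p'⟫)/(⟪n, p⟫ - ⟪n, p'⟫) with hs
    have hden : (0:ℝ) < ⟪n, p⟫ - ⟪n, p'⟫ := by linarith
    have hden' : ⟪n, p⟫ - ⟪n, p'⟫ ≠ 0 := ne_of_gt hden
    have hs0 : 0 < s := div_pos (by linarith) hden
    have hs1 : s < 1 := by rw [hs, div_lt_one hden]; linarith
    have hmP : s • p + (1 - s) • p' ∈ convexHull ℝ (Set.range x) :=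
      (convex_convexHull ℝ _) hpP hp'P (le_of_lt hs0) (by linarith) (by ring)
    have hmc : ⟪n, s • p + (1 - s) • p'⟫ = ⟪n, v₀⟫ := by
      rw [inner_add_right, real_inner_smul_right, real_inner_smul_right]
      set A := ⟪n, p⟫ with hA
      set B := ⟪n, p'⟫ with hB
      set C := ⟪n, v₀⟫ with hC
      rw [hs]
      field_simp
      ring
    have hmF : s • p + (1 - s) • p' ∈ F := hface0 _ hmP hmc
    have hseg : s • p + (1 - s) • p' ∈ openSegment ℝ p p' :=
      ⟨s, 1 - s, hs0, by linarith, by ring, rfl⟩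
    have hext := hF.2.2.1.2 hpP hp'P hmF hseg
    have := heq p hext
    linarith
  rcases hside with hside | hside
  · exact ⟨n, ⟪n, v₀⟫, horth, hside, heq, hface0⟩
  · refine ⟨-n, -⟪n, v₀⟫, fun d hd => by rw [inner_neg_left, horth d hd, neg_zero],
      fun p hp => by rw [inner_neg_left]; have := hside p hp; linarith,
      fun z hz => by rw [inner_neg_left, heq z hz],
      fun g hg hgc => hface0 g hg (by rw [inner_neg_left] at hgc; linarith)⟩

lemma facet_subset_eq (hinj : Function.Injective x)
    (hvert : Set.extremePoints ℝ (convexHull ℝ (Set.range x)) = Set.range x)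
    {F F' : Set E3} (hF : IsFacet3 (convexHull ℝ (Set.range x)) F)
    (hF' : IsFacet3 (convexHull ℝ (Set.range x)) F') (hsub : F' ⊆ F) : F' = F := by
  classical
  refine Set.Subset.antisymm hsub ?_
  set S' : Finset E3 := (vertsOf x F').image x with hS'def
  have hScoe : (S' : Set E3) = F' ∩ Set.range x := by
    rw [hS'def, Finset.coe_image, ← image_vertsOf (x := x) F']
  have hhull' : F' = convexHull ℝ (S' : Set E3) := by
    rw [hScoe]; exact facet_hull hvert hF'
  have hS'ne : S'.Nonempty := by
    apply Finset.Nonempty.image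
    rw [← Finset.card_pos]
    have := three_le_verts hinj hvert hF'
    omega
  obtain ⟨v₀, hv₀⟩ := id hS'ne
  have hv₀F' : v₀ ∈ F' := by
    rw [hhull']; exact subset_convexHull ℝ _ hv₀
  have hdireq : vectorSpan ℝ F' = vectorSpan ℝ F := by
    apply Submodule.eq_of_le_of_finrank_le (vectorSpan_mono ℝ hsub)
    rw [hF.2.2.2, hF'.2.2.2]
  intro g hgF
  have hgspan : g ∈ affineSpan ℝ (S' : Set E3) := by
    have hd : g - v₀ ∈ vectorSpan ℝ F := vsub_mem_vectorSpan ℝ hgF (hsub hv₀F')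
    rw [← hdireq] at hd
    have hdir : g - v₀ ∈ (affineSpan ℝ (S' : Set E3)).direction := by
      rw [direction_affineSpan, hScoe, facet_vectorSpan hvert hF']
      exact hd
    have hmem := AffineSubspace.vadd_mem_of_mem_direction hdir
      (subset_affineSpan ℝ _ hv₀)
    simpa [vadd_eq_add, sub_add_cancel] using hmem
  have := cent_mem hS'ne (hhull' ▸ hF'.2.2.1) (hF.2.2.1.1 hgF) hgspan
  rwa [← hhull'] at this

end

end NAL

namespace NAL

open Module RealInnerProductSpace

noncomputable section

lemma affine_values_dim {ι : Type} [Fintype ι] (y : ι → E3)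
    (h2 : finrank ℝ (vectorSpan ℝ (Set.range y)) = 2) :
    3 ≤ finrank ℝ (LinearMap.range (affEval y)) := by
  classical
  have hne : Nonempty ι := by
    by_contra h
    rw [not_nonempty_iff] at h
    rw [Set.range_eq_empty y, vectorSpan_empty] at h2
    simp at h2
  obtain ⟨i₀⟩ := hne
  have hspanD : vectorSpan ℝ (Set.range y) =
      Submodule.span ℝ ((fun z => z - y i₀) '' Set.range y) := by
    have h := vectorSpan_eq_span_vsub_set_right ℝ (Set.mem_range_self (f := y) i₀)
    simpa [vsub_eq_sub] using h
  have hb1 : ∃ b1, y b1 - y i₀ ≠ 0 := by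
    by_contra h
    push_neg at h
    have hle : vectorSpan ℝ (Set.range y) ≤ ⊥ := by
      rw [hspanD, Submodule.span_le]
      rintro z ⟨w, ⟨j, rfl⟩, rfl⟩
      simp [h j]
    rw [le_bot_iff] at hle
    rw [hle] at h2
    simp at h2
  obtain ⟨b1, hd1⟩ := hb1
  set d1 : E3 := y b1 - y i₀ with hd1def
  have hb2 : ∃ b2, y b2 - y i₀ ∉ Submodule.span ℝ ({d1} : Set E3) := by
    by_contra h
    push_neg at h
    have hle : vectorSpan ℝ (Set.range y) ≤ Submodule.span ℝ ({d1} : Set E3) := by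
      rw [hspanD, Submodule.span_le]
      rintro z ⟨w, ⟨j, rfl⟩, rfl⟩
      exact h j
    have h1 : finrank ℝ (Submodule.span ℝ ({d1} : Set E3)) = 1 := finrank_span_singleton hd1
    have hle' := Submodule.finrank_mono hle
    rw [h2, h1] at hle'
    omega
  obtain ⟨b2, hd2⟩ := hb2
  set d2 : E3 := y b2 - y i₀ with hd2def
  have hnd1 : (0:ℝ) < ⟪d1, d1⟫ :=
    lt_of_le_of_ne real_inner_self_nonneg (Ne.symm (inner_self_ne_zero.2 hd1))
  set κ : ℝ := ⟪d1, d2⟫ / ⟪d1, d1⟫ with hκ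
  set e2 : E3 := d2 - κ • d1 with he2def
  have he2ne : e2 ≠ 0 := by
    intro h0
    apply hd2
    have : d2 = κ • d1 := by
      have := sub_eq_zero.1 h0
      exact this
    rw [← hd2def] at *
    rw [this]
    exact Submodule.smul_mem _ _ (Submodule.mem_span_singleton_self d1)
  have he2d1 : ⟪d1, e2⟫ = 0 := by
    rw [he2def, inner_sub_right, real_inner_smul_right, hκ,
      div_mul_cancel₀ _ (ne_of_gt hnd1)]
    ring
  have hd1e2 : ⟪e2, d1⟫ = 0 := by rw [real_inner_comm]; exact he2d1
  have he2d2 : ⟪e2, d2⟫ = ⟪e2, e2⟫ := by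
    have hrw : d2 = e2 + κ • d1 := by rw [he2def]; abel
    conv_lhs => rw [hrw]
    rw [inner_add_right, real_inner_smul_right, hd1e2]
    ring
  have hne2 : (0:ℝ) < ⟪e2, e2⟫ :=
    lt_of_le_of_ne real_inner_self_nonneg (Ne.symm (inner_self_ne_zero.2 he2ne))
  have hsurj : ∀ T : Fin 3 → ℝ, ∃ wβ : E3 × ℝ,
      affEval y wβ i₀ = T 0 ∧ affEval y wβ b1 = T 1 ∧ affEval y wβ b2 = T 2 := by
    intro T
    set r : ℝ := (T 1 - T 0) / ⟪d1, d1⟫ with hr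
    set q : ℝ := (T 2 - T 0 - r * ⟪d1, d2⟫) / ⟪e2, e2⟫ with hq
    set w : E3 := r • d1 + q • e2 with hw
    have hwd1 : ⟪w, d1⟫ = T 1 - T 0 := by
      rw [hw, inner_add_left, real_inner_smul_left, real_inner_smul_left, hd1e2,
        mul_zero, add_zero, hr, div_mul_cancel₀ _ (ne_of_gt hnd1)]
    have hwd2 : ⟪w, d2⟫ = T 2 - T 0 := by
      rw [hw, inner_add_left, real_inner_smul_left, real_inner_smul_left, he2d2, hq,
        div_mul_cancel₀ _ (ne_of_gt hne2)]
      ring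
    refine ⟨(w, T 0 - ⟪w, y i₀⟫), ?_, ?_, ?_⟩
    · rw [affEval_apply]; ring
    · rw [affEval_apply]
      have : ⟪w, y b1⟫ = ⟪w, y i₀⟫ + ⟪w, d1⟫ := by
        rw [hd1def, inner_sub_right]; ring
      rw [this, hwd1]; ring
    · rw [affEval_apply]
      have : ⟪w, y b2⟫ = ⟪w, y i₀⟫ + ⟪w, d2⟫ := by
        rw [hd2def, inner_sub_right]; ring
      rw [this, hwd2]; ring
  set ev : (ι → ℝ) →ₗ[ℝ] (Fin 3 → ℝ) := LinearMap.funLeft ℝ ℝ (![i₀, b1, b2]) with hev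
  have hsurj' : Function.Surjective (ev.comp (affEval y)) := by
    intro T
    obtain ⟨wβ, h0, h1, h2'⟩ := hsurj T
    refine ⟨wβ, ?_⟩
    funext t
    fin_cases t <;> simpa [hev, LinearMap.funLeft] using (by assumption)
  have htop : LinearMap.range (ev.comp (affEval y)) = ⊤ := LinearMap.range_eq_top.2 hsurj'
  have h3 : finrank ℝ (LinearMap.range (ev.comp (affEval y))) = 3 := by
    rw [htop, finrank_top, Module.finrank_pi]
    simp
  rw [LinearMap.range_comp] at h3
  have hle := Submodule.finrank_map_le ev (LinearMap.range (affEval y))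
  omega

def resMap (V : ℕ) (T : Finset (Fin V)) : ((Fin V) → ℝ) →ₗ[ℝ] ({i // i ∈ T} → ℝ) :=
  LinearMap.funLeft ℝ ℝ Subtype.val

/-- The submodule of speeds that are affine on the vertex set `T`. -/
def SMod {V : ℕ} (x : Fin V → E3) (T : Finset (Fin V)) : Submodule ℝ ((Fin V) → ℝ) :=
  (LinearMap.range (affEval (fun j : {i // i ∈ T} => x j))).comap (resMap V T)

lemma mem_SMod {V : ℕ} {x : Fin V → E3} {T : Finset (Fin V)} {α : Fin V → ℝ} :
    α ∈ SMod x T ↔ ∃ (w : E3) (β : ℝ), ∀ i ∈ T, α i = ⟪w, x i⟫ + β := by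
  rw [SMod, Submodule.mem_comap, LinearMap.mem_range]
  constructor
  · rintro ⟨⟨w, β⟩, h⟩
    refine ⟨w, β, fun i hi => ?_⟩
    have h' := congrFun h ⟨i, hi⟩
    rw [affEval_apply] at h'
    exact h'.symm
  · rintro ⟨w, β, h⟩
    refine ⟨(w, β), funext fun j => ?_⟩
    rw [affEval_apply]
    exact (h j j.2).symm

lemma finrank_SMod {V : ℕ} (x : Fin V → E3) (T : Finset (Fin V))
    (h2 : finrank ℝ (vectorSpan ℝ (x '' ↑T)) = 2) :
    (V : ℤ) - T.card + 3 ≤ finrank ℝ (SMod x T) := by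
  classical
  set R := LinearMap.range (affEval (fun j : {i // i ∈ T} => x j)) with hR
  have hR3 : 3 ≤ finrank ℝ R := by
    have hrange : Set.range (fun j : {i // i ∈ T} => x j) = x '' ↑T := by
      ext z
      simp [Set.mem_range, Subtype.exists, Finset.mem_coe]
    apply affine_values_dim
    rw [hrange]
    exact h2
  have hker : SMod x T = LinearMap.ker ((R.mkQ).comp (resMap V T)) := by
    rw [LinearMap.ker_comp, Submodule.ker_mkQ]
    rfl
  have hrank := LinearMap.finrank_range_add_finrank_ker ((R.mkQ).comp (resMap V T))
  have hdom : finrank ℝ ((Fin V) → ℝ) = V := by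
    rw [Module.finrank_pi]; simp
  have hquot : finrank ℝ (({i // i ∈ T} → ℝ) ⧸ R) + finrank ℝ R = T.card := by
    have h := Submodule.finrank_quotient_add_finrank R
    rwa [Module.finrank_pi, Fintype.card_coe] at h
  have hrange_le : finrank ℝ (LinearMap.range ((R.mkQ).comp (resMap V T)))
      ≤ finrank ℝ (({i // i ∈ T} → ℝ) ⧸ R) := Submodule.finrank_le _
  rw [hdom, ← hker] at hrank
  omega

lemma finrank_inf_ge {V : ℕ} {ι : Type} [DecidableEq ι] (s : Finset ι)
    (Sf : ι → Submodule ℝ ((Fin V) → ℝ)) (b : ι → ℤ)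
    (hb : ∀ τ ∈ s, (V:ℤ) - b τ ≤ finrank ℝ (Sf τ)) :
    (V : ℤ) - ∑ τ ∈ s, b τ ≤ finrank ℝ ((s.inf Sf) : Submodule ℝ ((Fin V) → ℝ)) := by
  classical
  induction s using Finset.induction_on with
  | empty =>
    rw [Finset.inf_empty, Finset.sum_empty]
    have htop : finrank ℝ ((⊤ : Submodule ℝ ((Fin V) → ℝ))) = V := by
      rw [finrank_top, Module.finrank_pi]; simp
    omega
  | @insert a s ha ih =>
    rw [Finset.inf_insert, Finset.sum_insert ha]
    have h1 := ih (fun τ hτ => hb τ (Finset.mem_insert_of_mem hτ))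
    have h2 := hb a (Finset.mem_insert_self a s)
    have hsum := Submodule.finrank_sup_add_finrank_inf_eq (Sf a) (s.inf Sf)
    have hle : finrank ℝ ((Sf a ⊔ s.inf Sf : Submodule ℝ ((Fin V) → ℝ))) ≤ V := by
      have h := Submodule.finrank_le (Sf a ⊔ s.inf Sf)
      rwa [Module.finrank_pi, Fintype.card_fin] at h
    omega

end

end NAL

namespace NAL

open Module RealInnerProductSpace

noncomputable section

variable {V : ℕ} {x : Fin V → E3}

/-- Vertex `x i` is a "crossing" vertex of `F` w.r.t. the sweep functional `⟪u, ·⟫`. -/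
def Crossing (u : E3) (x : Fin V → E3) (i : Fin V) (F : Set E3) : Prop :=
  x i ∈ F ∧ (∃ p, x p ∈ F ∧ ⟪u, x i⟫ < ⟪u, x p⟫) ∧ (∃ m, x m ∈ F ∧ ⟪u, x m⟫ < ⟪u, x i⟫)

lemma extreme_vertex (hvert : Set.extremePoints ℝ (convexHull ℝ (Set.range x)) = Set.range x)
    (i : Fin V) :
    x i ∈ convexHull ℝ (Set.range x) ∧
      ∀ x₁ ∈ convexHull ℝ (Set.range x), ∀ x₂ ∈ convexHull ℝ (Set.range x),
        x i ∈ openSegment ℝ x₁ x₂ → x₁ = x i ∧ x₂ = x i := by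
  have h : x i ∈ Set.extremePoints ℝ (convexHull ℝ (Set.range x)) := by
    rw [hvert]; exact ⟨i, rfl⟩
  rwa [mem_extremePoints] at h

lemma crossing_data {u : E3} {i : Fin V} {F : Set E3}
    (hvert : Set.extremePoints ℝ (convexHull ℝ (Set.range x)) = Set.range x)
    (hFc : Convex ℝ F) (hc : Crossing u x i F) :
    ∃ (q : E3) (p m : Fin V), q ∈ F ∧ q ≠ x i ∧ ⟪u, q - x i⟫ = 0 ∧
      x p ∈ F ∧ x m ∈ F ∧ ⟪u, x i⟫ < ⟪u, x p⟫ ∧ ⟪u, x m⟫ < ⟪u, x i⟫ ∧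
      q ∈ openSegment ℝ (x p) (x m) := by
  obtain ⟨hxi, ⟨p, hpF, hp⟩, ⟨m, hmF, hm⟩⟩ := hc
  set s : ℝ := (⟪u, x i⟫ - ⟪u, x m⟫) / (⟪u, x p⟫ - ⟪u, x m⟫) with hs
  have hden : (0:ℝ) < ⟪u, x p⟫ - ⟪u, x m⟫ := by linarith
  have hs0 : 0 < s := div_pos (by linarith) hden
  have hs1 : s < 1 := by rw [hs, div_lt_one hden]; linarith
  set q : E3 := s • x p + (1 - s) • x m with hq
  have hqF : q ∈ F := hFc hpF hmF (le_of_lt hs0) (by linarith) (by ring)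
  have hqu : ⟪u, q - x i⟫ = 0 := by
    rw [inner_sub_right, hq, inner_add_right, real_inner_smul_right, real_inner_smul_right]
    set A := ⟪u, x p⟫ with hA
    set B := ⟪u, x m⟫ with hB
    set C := ⟪u, x i⟫ with hC
    rw [hs]
    have hden' : A - B ≠ 0 := ne_of_gt hden
    field_simp
    ring
  have hqseg : q ∈ openSegment ℝ (x p) (x m) := ⟨s, 1 - s, hs0, by linarith, by ring, rfl⟩
  have hqne : q ≠ x i := by
    intro h0
    obtain ⟨-, hvex⟩ := extreme_vertex hvert i
    have h1 := hvex (x p) (subset_convexHull ℝ _ ⟨p, rfl⟩)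
      (x m) (subset_convexHull ℝ _ ⟨m, rfl⟩) (h0 ▸ hqseg)
    have : ⟪u, x p⟫ = ⟪u, x i⟫ := by rw [h1.1]
    linarith
  exact ⟨q, p, m, hqF, hqne, hqu, hpF, hmF, hp, hm, hqseg⟩

/-- Two distinct facets crossing at a common vertex cannot have parallel crossing
directions. -/
lemma pair_lemma (hinj : Function.Injective x)
    (hvert : Set.extremePoints ℝ (convexHull ℝ (Set.range x)) = Set.range x)
    {u : E3} {i : Fin V} {F F' : Set E3}
    (hF : IsFacet3 (convexHull ℝ (Set.range x)) F)
    (hF' : IsFacet3 (convexHull ℝ (Set.range x)) F') (hne : F ≠ F')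
    (hxi : x i ∈ F) (hxi' : x i ∈ F')
    {q q' : E3} {p' m' : Fin V}
    (hq : q ∈ F) (hqne : q ≠ x i) (hqu : ⟪u, q - x i⟫ = 0)
    (hq' : q' ∈ F') (hq'ne : q' ≠ x i)
    (hp' : x p' ∈ F') (hpu' : ⟪u, x i⟫ < ⟪u, x p'⟫)
    (hseg' : q' ∈ openSegment ℝ (x p') (x m'))
    {a : ℝ} (ha : a ≠ 0) (heq : q' - x i = a • (q - x i)) : False := by
  have hFP : F ⊆ convexHull ℝ (Set.range x) := hF.2.2.1.1
  have hF'P : F' ⊆ convexHull ℝ (Set.range x) := hF'.2.2.1.1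
  obtain ⟨-, hvex⟩ := extreme_vertex hvert i
  rcases lt_or_gt_of_ne ha with haneg | hapos
  · -- negative multiple : x i is inside the segment [q', q]
    set b : ℝ := -a with hb
    have hbpos : 0 < b := by rw [hb]; linarith
    have h1b : (0:ℝ) < 1 + b := by linarith
    have h1b' : (1:ℝ) + b ≠ 0 := ne_of_gt h1b
    have hq'rw : q' = x i + a • (q - x i) := by
      rw [← heq]; abel
    have hseg : x i ∈ openSegment ℝ q' q := by
      refine ⟨1/(1+b), b/(1+b), div_pos one_pos h1b, div_pos hbpos h1b, ?_, ?_⟩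
      · field_simp
      · rw [hq'rw, show a = -b from by rw [hb]; ring]
        match_scalars <;> field_simp <;> ring
    have h2 := hvex q' (hF'P hq') q (hFP hq) hseg
    exact hq'ne h2.1
  · -- positive multiple
    obtain ⟨n, c, hOrth, hLe, hEq, hFace⟩ := facet_support hinj hvert hF
    have hnq : ⟪n, q - x i⟫ = 0 := by
      have h1 := hEq q hq
      have h2 := hEq (x i) hxi
      rw [inner_sub_right]
      linarith
    have hq'c : ⟪n, q'⟫ = c := by
      have h0 : ⟪n, q' - x i⟫ = 0 := by
        rw [heq, real_inner_smul_right, hnq]; ring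
      rw [inner_sub_right] at h0
      have h2 := hEq (x i) hxi
      linarith
    have hq'F : q' ∈ F := hFace q' (hF'P hq') hq'c
    have hpm := hF.2.2.1.2 (subset_convexHull ℝ _ ⟨p', rfl⟩)
      (subset_convexHull ℝ _ ⟨m', rfl⟩) hq'F hseg'
    have hp'F : x p' ∈ F := hpm
    -- spans
    have hdd0 : q - x i ≠ 0 := sub_ne_zero.2 hqne
    have huu : ⟪u, x p' - x i⟫ ≠ 0 := by
      rw [inner_sub_right]
      have : ⟪u, x i⟫ < ⟪u, x p'⟫ := hpu'
      intro h0
      linarith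
    have hindep := indep_pair hdd0 hqu huu
    have hspan2 := finrank_span_pair' hindep
    have hsub1 : Submodule.span ℝ {q - x i, x p' - x i} ≤ vectorSpan ℝ F := by
      rw [Submodule.span_le]
      rintro z hz
      rcases hz with rfl | hz
      · exact vsub_mem_vectorSpan ℝ hq hxi
      · rw [Set.mem_singleton_iff] at hz
        subst hz
        exact vsub_mem_vectorSpan ℝ hp'F hxi
    have heq1 : Submodule.span ℝ {q - x i, x p' - x i} = vectorSpan ℝ F :=
      Submodule.eq_of_le_of_finrank_le hsub1 (by rw [hF.2.2.2, hspan2])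
    have hsub2 : Submodule.span ℝ {q - x i, x p' - x i} ≤ vectorSpan ℝ F' := by
      rw [Submodule.span_le]
      rintro z hz
      rcases hz with rfl | hz
      · have hmem : q' - x i ∈ vectorSpan ℝ F' := vsub_mem_vectorSpan ℝ hq' hxi'
        have : q - x i = a⁻¹ • (q' - x i) := by
          rw [heq, smul_smul, inv_mul_cancel₀ ha, one_smul]
        rw [this]
        exact Submodule.smul_mem _ _ hmem
      · rw [Set.mem_singleton_iff] at hz
        subst hz
        exact vsub_mem_vectorSpan ℝ hp' hxi'
    have heq2 : Submodule.span ℝ {q - x i, x p' - x i} = vectorSpan ℝ F' :=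
      Submodule.eq_of_le_of_finrank_le hsub2 (by rw [hF'.2.2.2, hspan2])
    have hsubset : F' ⊆ F := by
      intro z hz
      apply hFace z (hF'P hz)
      have hzd : z - x i ∈ vectorSpan ℝ F := by
        rw [← heq1, heq2]
        exact vsub_mem_vectorSpan ℝ hz hxi'
      have h0 := hOrth _ hzd
      rw [inner_sub_right] at h0
      have h2 := hEq (x i) hxi
      linarith
    exact hne (facet_subset_eq hinj hvert hF hF' hsubset).symm

/-- Three crossing directions cannot be positively dependent. -/
lemma posdep_lemma
    (hvert : Set.extremePoints ℝ (convexHull ℝ (Set.range x)) = Set.range x)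
    {i : Fin V} {qa qb qc : E3}
    (hqaP : qa ∈ convexHull ℝ (Set.range x)) (hqbP : qb ∈ convexHull ℝ (Set.range x))
    (hqcP : qc ∈ convexHull ℝ (Set.range x)) (hqane : qa ≠ x i)
    {l1 l2 l3 : ℝ} (h1 : 0 < l1) (h2 : 0 < l2) (h3 : 0 < l3)
    (hrel : l1 • (qa - x i) + l2 • (qb - x i) + l3 • (qc - x i) = 0) : False := by
  obtain ⟨-, hvex⟩ := extreme_vertex hvert i
  have hLpos : (0:ℝ) < l1 + l2 + l3 := by linarith
  have h23 : (0:ℝ) < l2 + l3 := by linarith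
  have hcomb : l1 • qa + l2 • qb + l3 • qc = (l1 + l2 + l3) • x i := by
    have hid : l1 • qa + l2 • qb + l3 • qc - (l1 + l2 + l3) • x i
        = l1 • (qa - x i) + l2 • (qb - x i) + l3 • (qc - x i) := by module
    apply eq_of_sub_eq_zero
    rw [hid, hrel]
  have hrP : (l2/(l2+l3)) • qb + (l3/(l2+l3)) • qc ∈ convexHull ℝ (Set.range x) :=
    (convex_convexHull ℝ _) hqbP hqcP (by positivity) (by positivity)
      (by field_simp)
  have hxeq : (l1/(l1+l2+l3)) • qa +
      ((l2+l3)/(l1+l2+l3)) • ((l2/(l2+l3)) • qb + (l3/(l2+l3)) • qc) = x i := by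
    have hid : (l1/(l1+l2+l3)) • qa +
        ((l2+l3)/(l1+l2+l3)) • ((l2/(l2+l3)) • qb + (l3/(l2+l3)) • qc)
        = (1/(l1+l2+l3)) • (l1 • qa + l2 • qb + l3 • qc) := by
      match_scalars <;> field_simp <;> ring
    rw [hid, hcomb, smul_smul, one_div, inv_mul_cancel₀ (ne_of_gt hLpos), one_smul]
  have hseg : x i ∈ openSegment ℝ qa ((l2/(l2+l3)) • qb + (l3/(l2+l3)) • qc) := by
    refine ⟨l1/(l1+l2+l3), (l2+l3)/(l1+l2+l3), by positivity, by positivity, ?_, hxeq⟩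
    field_simp
    ring
  exact hqane (hvex qa hqaP _ hrP hseg).1

end

end NAL

namespace NAL

open Module RealInnerProductSpace

noncomputable section

variable {V : ℕ} {x : Fin V → E3}

lemma cone_lemma (hinj : Function.Injective x)
    (hvert : Set.extremePoints ℝ (convexHull ℝ (Set.range x)) = Set.range x)
    {u : E3} {i : Fin V} {Fa Fb Fc : Set E3}
    (hFa : IsFacet3 (convexHull ℝ (Set.range x)) Fa)
    (hFb : IsFacet3 (convexHull ℝ (Set.range x)) Fb)
    (hFc : IsFacet3 (convexHull ℝ (Set.range x)) Fc)
    (hac : Fa ≠ Fc)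
    (hxia : x i ∈ Fa) (hxib : x i ∈ Fb) (hxic : x i ∈ Fc)
    {qa qb qc : E3} {pa ma pc mc : Fin V}
    (hqa : qa ∈ Fa) (hqane : qa ≠ x i) (hqau : ⟪u, qa - x i⟫ = 0)
    (hpa : x pa ∈ Fa) (hpau : ⟪u, x i⟫ < ⟪u, x pa⟫)
    (hsega : qa ∈ openSegment ℝ (x pa) (x ma))
    (hqb : qb ∈ Fb)
    (hqc : qc ∈ Fc) (hqcne : qc ≠ x i) (hqcu : ⟪u, qc - x i⟫ = 0)
    (hpc : x pc ∈ Fc) (hpcu : ⟪u, x i⟫ < ⟪u, x pc⟫)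
    (hsegc : qc ∈ openSegment ℝ (x pc) (x mc))
    {A B : ℝ} (hA : 0 < A) (hB : 0 < B)
    (heqc : qc - x i = A • (qa - x i) + B • (qb - x i)) : False := by
  obtain ⟨n, c, hOrth, hLe, hEq, hFace⟩ := facet_support hinj hvert hFc
  have hFaP := hFa.2.2.1.1
  have hFbP := hFb.2.2.1.1
  have hxi_c : ⟪n, x i⟫ = c := hEq _ hxic
  have hdc0 : ⟪n, qc - x i⟫ = 0 := by
    have h := hEq _ hqc; rw [inner_sub_right]; linarith
  have hda_le : ⟪n, qa - x i⟫ ≤ 0 := by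
    have h := hLe _ (hFaP hqa); rw [inner_sub_right]; linarith
  have hdb_le : ⟪n, qb - x i⟫ ≤ 0 := by
    have h := hLe _ (hFbP hqb); rw [inner_sub_right]; linarith
  have hda0 : ⟪n, qa - x i⟫ = 0 := by
    have h0 : (0:ℝ) = A * ⟪n, qa - x i⟫ + B * ⟪n, qb - x i⟫ := by
      rw [← hdc0, heqc, inner_add_right, real_inner_smul_right, real_inner_smul_right]
    nlinarith
  have hqaFc : qa ∈ Fc := by
    apply hFace _ (hFaP hqa)
    rw [inner_sub_right] at hda0; linarith
  have hpmc := hFc.2.2.1.2 (subset_convexHull ℝ _ ⟨pa, rfl⟩)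
    (subset_convexHull ℝ _ ⟨ma, rfl⟩) hqaFc hsega
  have hpaFc : x pa ∈ Fc := hpmc
  have hdd0 : qa - x i ≠ 0 := sub_ne_zero.2 hqane
  have huu : ⟪u, x pa - x i⟫ ≠ 0 := by
    rw [inner_sub_right]; intro h0; linarith
  have hindep := indep_pair hdd0 hqau huu
  have hspan2 := finrank_span_pair' hindep
  have hsub1 : Submodule.span ℝ {qa - x i, x pa - x i} ≤ vectorSpan ℝ Fc := by
    rw [Submodule.span_le]
    rintro z hz
    rcases hz with rfl | hz
    · exact vsub_mem_vectorSpan ℝ hqaFc hxic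
    · rw [Set.mem_singleton_iff] at hz; subst hz
      exact vsub_mem_vectorSpan ℝ hpaFc hxic
  have heq1 : Submodule.span ℝ {qa - x i, x pa - x i} = vectorSpan ℝ Fc :=
    Submodule.eq_of_le_of_finrank_le hsub1 (by rw [hFc.2.2.2, hspan2])
  have hdcmem : qc - x i ∈ Submodule.span ℝ {qa - x i, x pa - x i} := by
    rw [heq1]; exact vsub_mem_vectorSpan ℝ hqc hxic
  obtain ⟨s, t, hst⟩ := Submodule.mem_span_pair.1 hdcmem
  have ht0 : t = 0 := by
    have happ := congrArg (fun z => ⟪u, z⟫) hst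
    simp only [inner_add_right, real_inner_smul_right] at happ
    rw [hqau, hqcu, mul_zero] at happ
    rcases mul_eq_zero.1 (by linarith : t * ⟪u, x pa - x i⟫ = 0) with h | h
    · exact h
    · exact absurd h huu
  rw [ht0, zero_smul, add_zero] at hst
  have hs0 : s ≠ 0 := by
    intro h
    rw [h, zero_smul] at hst
    exact (sub_ne_zero.2 hqcne) hst.symm
  exact pair_lemma hinj hvert hFa hFc hac hxia hxic hqa hqane hqau hqc hqcne
    hpc hpcu hsegc hs0 hst.symm

lemma no_three_cross (hinj : Function.Injective x)
    (hvert : Set.extremePoints ℝ (convexHull ℝ (Set.range x)) = Set.range x)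
    {u : E3} (hu : ∀ i j : Fin V, i ≠ j → ⟪u, x i⟫ ≠ ⟪u, x j⟫) (hV : 3 ≤ V)
    {i : Fin V} {F1 F2 F3 : Set E3}
    (hF1 : IsFacet3 (convexHull ℝ (Set.range x)) F1)
    (hF2 : IsFacet3 (convexHull ℝ (Set.range x)) F2)
    (hF3 : IsFacet3 (convexHull ℝ (Set.range x)) F3)
    (h12 : F1 ≠ F2) (h13 : F1 ≠ F3) (h23 : F2 ≠ F3)
    (hc1 : Crossing u x i F1) (hc2 : Crossing u x i F2) (hc3 : Crossing u x i F3) : False := by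
  have hxi1 : x i ∈ F1 := hc1.1
  have hxi2 : x i ∈ F2 := hc2.1
  have hxi3 : x i ∈ F3 := hc3.1
  obtain ⟨q1, p1, m1, hq1F, hq1ne, hq1u, hp1F, hm1F, hp1u, hm1u, hseg1⟩ :=
    crossing_data hvert hF1.2.1 hc1
  obtain ⟨q2, p2, m2, hq2F, hq2ne, hq2u, hp2F, hm2F, hp2u, hm2u, hseg2⟩ :=
    crossing_data hvert hF2.2.1 hc2
  obtain ⟨q3, p3, m3, hq3F, hq3ne, hq3u, hp3F, hm3F, hp3u, hm3u, hseg3⟩ :=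
    crossing_data hvert hF3.2.1 hc3
  have hu0 : u ≠ 0 := by
    intro h0
    have h01 : (⟨0, by omega⟩ : Fin V) ≠ ⟨1, by omega⟩ := by
      intro h
      have := Fin.mk.injEq (n := V) 0 (by omega) 1 (by omega) ▸ h
      simp at this
    exact hu _ _ h01 (by rw [h0, inner_zero_left, inner_zero_left])
  have hWrank : finrank ℝ ((Submodule.span ℝ ({u} : Set E3))ᗮ) = 2 := by
    have h1 : finrank ℝ (Submodule.span ℝ ({u} : Set E3)) = 1 := finrank_span_singleton hu0
    have h2 := Submodule.finrank_add_finrank_orthogonal (K := Submodule.span ℝ ({u} : Set E3))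
    have hdim : finrank ℝ E3 = 3 := by simp
    omega
  have hd1ne : q1 - x i ≠ 0 := sub_ne_zero.2 hq1ne
  have hd2ne : q2 - x i ≠ 0 := sub_ne_zero.2 hq2ne
  have hd3ne : q3 - x i ≠ 0 := sub_ne_zero.2 hq3ne
  by_cases hind : LinearIndependent ℝ ![q1 - x i, q2 - x i]
  · have hsub : Submodule.span ℝ {q1 - x i, q2 - x i} ≤ (Submodule.span ℝ ({u} : Set E3))ᗮ := by
      rw [Submodule.span_le]
      rintro z hz
      rcases hz with rfl | hz
      · rw [SetLike.mem_coe, Submodule.mem_orthogonal_singleton_iff_inner_right]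
        exact hq1u
      · rw [Set.mem_singleton_iff] at hz; subst hz
        rw [SetLike.mem_coe, Submodule.mem_orthogonal_singleton_iff_inner_right]
        exact hq2u
    have hspaneq : Submodule.span ℝ {q1 - x i, q2 - x i} =
        (Submodule.span ℝ ({u} : Set E3))ᗮ :=
      Submodule.eq_of_le_of_finrank_le hsub (by rw [hWrank, finrank_span_pair' hind])
    have hd3mem : q3 - x i ∈ Submodule.span ℝ {q1 - x i, q2 - x i} := by
      rw [hspaneq, Submodule.mem_orthogonal_singleton_iff_inner_right]
      exact hq3u
    obtain ⟨a, b, hab⟩ := Submodule.mem_span_pair.1 hd3mem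
    rcases lt_trichotomy a 0 with ha | ha | ha <;> rcases lt_trichotomy b 0 with hb | hb | hb
    · -- a<0, b<0 : positive dependence
      refine posdep_lemma hvert (hF1.2.2.1.1 hq1F) (hF2.2.2.1.1 hq2F) (hF3.2.2.1.1 hq3F)
        hq1ne (by linarith : (0:ℝ) < -a) (by linarith : (0:ℝ) < -b) one_pos ?_
      have hid : (-a) • (q1 - x i) + (-b) • (q2 - x i) + (1:ℝ) • (q3 - x i)
          = (q3 - x i) - (a • (q1 - x i) + b • (q2 - x i)) := by module
      rw [hid, hab, sub_self]
    · -- a<0, b=0 : pair (F1, F3)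
      rw [hb, zero_smul, add_zero] at hab
      exact pair_lemma hinj hvert hF1 hF3 h13 hxi1 hxi3 hq1F hq1ne hq1u hq3F hq3ne
        hp3F hp3u hseg3 (ne_of_lt ha) hab.symm
    · -- a<0, b>0 : cone with target F2
      have hbne : b ≠ 0 := ne_of_gt hb
      refine cone_lemma hinj hvert hF1 hF3 hF2 h12 hxi1 hxi3 hxi2 hq1F hq1ne hq1u
        hp1F hp1u hseg1 hq3F hq2F hq2ne hq2u hp2F hp2u hseg2
        (div_pos (by linarith : (0:ℝ) < -a) hb) (one_div_pos.2 hb) ?_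
      rw [← hab]
      match_scalars <;> field_simp <;> ring
    · -- a=0, b<0 : pair (F2, F3)
      rw [ha, zero_smul, zero_add] at hab
      exact pair_lemma hinj hvert hF2 hF3 h23 hxi2 hxi3 hq2F hq2ne hq2u hq3F hq3ne
        hp3F hp3u hseg3 (ne_of_lt hb) hab.symm
    · -- a=0, b=0
      rw [ha, hb, zero_smul, zero_smul, add_zero] at hab
      exact hd3ne hab.symm
    · -- a=0, b>0 : pair (F2, F3)
      rw [ha, zero_smul, zero_add] at hab
      exact pair_lemma hinj hvert hF2 hF3 h23 hxi2 hxi3 hq2F hq2ne hq2u hq3F hq3ne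
        hp3F hp3u hseg3 (ne_of_gt hb) hab.symm
    · -- a>0, b<0 : cone with target F1
      have hane : a ≠ 0 := ne_of_gt ha
      refine cone_lemma hinj hvert hF2 hF3 hF1 h12.symm hxi2 hxi3 hxi1 hq2F hq2ne hq2u
        hp2F hp2u hseg2 hq3F hq1F hq1ne hq1u hp1F hp1u hseg1
        (div_pos (by linarith : (0:ℝ) < -b) ha) (one_div_pos.2 ha) ?_
      rw [← hab]
      match_scalars <;> field_simp <;> ring
    · -- a>0, b=0 : pair (F1, F3)
      rw [hb, zero_smul, add_zero] at hab
      exact pair_lemma hinj hvert hF1 hF3 h13 hxi1 hxi3 hq1F hq1ne hq1u hq3F hq3ne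
        hp3F hp3u hseg3 (ne_of_gt ha) hab.symm
    · -- a>0, b>0 : cone with target F3
      exact cone_lemma hinj hvert hF1 hF2 hF3 h13 hxi1 hxi2 hxi3 hq1F hq1ne hq1u
        hp1F hp1u hseg1 hq2F hq3F hq3ne hq3u hp3F hp3u hseg3 ha hb hab.symm
  · rw [LinearIndependent.pair_iff] at hind
    push_neg at hind
    obtain ⟨s, t, hst, hnz⟩ := hind
    by_cases ht : t = 0
    · subst ht
      rw [zero_smul, add_zero, smul_eq_zero] at hst
      rcases hst with h | h
      · exact hnz h rfl
      · exact hd1ne h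
    · refine pair_lemma hinj hvert hF1 hF2 h12 hxi1 hxi2 hq1F hq1ne hq1u hq2F hq2ne
        hp2F hp2u hseg2 (a := -s/t) ?_ ?_
      · intro h0
        have hs0 : s = 0 := by
          rcases div_eq_zero_iff.1 h0 with h | h
          · linarith [neg_eq_zero.1 h]
          · exact absurd h ht
        rw [hs0, zero_smul, zero_add, smul_eq_zero] at hst
        rcases hst with h | h
        · exact ht h
        · exact hd2ne h
      · have hid : q2 - x i = (1/t) • (s • (q1 - x i) + t • (q2 - x i)) +
            (-s/t) • (q1 - x i) := by
          match_scalars <;> field_simp <;> ring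
        rw [hid, hst, smul_zero, zero_add]

end

end NAL

namespace NAL

open Module RealInnerProductSpace

noncomputable section

def FacetT (V : ℕ) (x : Fin V → E3) : Type :=
  {F : Set E3 // IsFacet3 (convexHull ℝ (Set.range x)) F}

theorem main_aux (V : ℕ) (x : Fin V → E3)
    (hinj : Function.Injective x)
    (hvert : Set.extremePoints ℝ (convexHull ℝ (Set.range x)) = Set.range x)
    (Δ : ℕ)
    (hΔex : ∃ G₀, IsFacet3 (convexHull ℝ (Set.range x)) G₀ ∧
      Nat.card (G₀ ∩ Set.range x : Set _) = Δ)
    (hbig : (V : ℤ) - (Nat.card {F : Set (EuclideanSpace ℝ (Fin 3)) //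
        IsFacet3 (convexHull ℝ (Set.range x)) F} : ℤ) + 3 < (Δ : ℤ)) :
    ∃ θ : EuclideanSpace ℝ (Fin 3), ‖θ‖ = 1 ∧
      ∃ α : Fin V → ℝ, IsAdmissible V x θ α ∧
        ¬ ∃ (w : EuclideanSpace ℝ (Fin 3)) (β : ℝ), ∀ i, α i = (inner ℝ w (x i) : ℝ) + β := by
  classical
  obtain ⟨G₀, hG₀, hG₀card⟩ := hΔex
  have hΔverts : (vertsOf x G₀).card = Δ := by
    rw [← ncard_inter hinj G₀]; exact hG₀card
  have hΔ3 : 3 ≤ Δ := by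
    rw [← hΔverts]; exact three_le_verts hinj hvert hG₀
  have hVge : 3 ≤ V := by
    have h1 : (vertsOf x G₀).card ≤ V := by
      have h := Finset.card_le_card (Finset.subset_univ (vertsOf x G₀))
      simpa using h
    omega
  -- finiteness of the facet type
  have hfinT : Finite (FacetT V x) := by
    by_contra hinf
    rw [not_finite_iff_infinite] at hinf
    have h0 : Nat.card {F : Set (EuclideanSpace ℝ (Fin 3)) //
        IsFacet3 (convexHull ℝ (Set.range x)) F} = 0 :=
      @Nat.card_eq_zero_of_infinite _ hinf
    rw [h0] at hbig
    have hΔV : Δ ≤ V := by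
      have h1 : (vertsOf x G₀).card ≤ V := by
        have h := Finset.card_le_card (Finset.subset_univ (vertsOf x G₀))
        simpa using h
      omega
    omega
  have hFty : Fintype (FacetT V x) := Fintype.ofFinite _
  have hcard_eq : (Nat.card {F : Set (EuclideanSpace ℝ (Fin 3)) //
      IsFacet3 (convexHull ℝ (Set.range x)) F}) = Fintype.card (FacetT V x) :=
    Eq.trans (by rfl) Nat.card_eq_fintype_card
  -- direction θ parallel to the big facet
  obtain ⟨θ, hθnorm, hθmem⟩ : ∃ θ : E3, ‖θ‖ = 1 ∧ θ ∈ vectorSpan ℝ G₀ := by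
    have hrankG₀ : finrank ℝ (vectorSpan ℝ G₀) = 2 := hG₀.2.2.2
    obtain ⟨v, hvmem, hv0⟩ := Submodule.exists_mem_ne_zero_of_ne_bot
      (p := vectorSpan ℝ G₀) (by
        intro hbot
        rw [hbot] at hrankG₀
        simp at hrankG₀)
    refine ⟨‖v‖⁻¹ • v, ?_, Submodule.smul_mem _ _ hvmem⟩
    rw [norm_smul, norm_inv, norm_norm, inv_mul_cancel₀ (norm_ne_zero_iff.2 hv0)]
  -- generic sweep functional
  obtain ⟨u, hu⟩ := exists_generic x hinj
  have hvalinj : ∀ i j : Fin V, ⟪u, x i⟫ = ⟪u, x j⟫ → i = j := by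
    intro i j h
    by_contra hne
    exact hu i j hne h
  -- crossing vertex sets
  set M : FacetT V x → Finset (Fin V) := fun τ =>
    (vertsOf x τ.1).filter (fun i =>
      (∃ j ∈ vertsOf x τ.1, ⟪u, x j⟫ < ⟪u, x i⟫) ∧
      (∃ j ∈ vertsOf x τ.1, ⟪u, x i⟫ < ⟪u, x j⟫)) with hMdef
  have hMcard : ∀ τ : FacetT V x, (vertsOf x τ.1).card = (M τ).card + 2 := by
    intro τ
    have h3 : 3 ≤ (vertsOf x τ.1).card := three_le_verts hinj hvert τ.2
    have hne : (vertsOf x τ.1).Nonempty := Finset.card_pos.1 (by omega)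
    obtain ⟨imax, hmaxmem, hmax⟩ := Finset.exists_max_image (vertsOf x τ.1)
      (fun i => ⟪u, x i⟫) hne
    obtain ⟨imin, hminmem, hmin⟩ := Finset.exists_min_image (vertsOf x τ.1)
      (fun i => ⟪u, x i⟫) hne
    have hneq : imax ≠ imin := by
      intro heqm
      obtain ⟨i1, hi1, i2, hi2, hne12⟩ := Finset.one_lt_card.1
        (by omega : 1 < (vertsOf x τ.1).card)
      apply hne12
      apply hvalinj
      have e1 : ⟪u, x i1⟫ = ⟪u, x imax⟫ :=
        le_antisymm (hmax _ hi1) (by rw [heqm]; exact hmin _ hi1)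
      have e2 : ⟪u, x i2⟫ = ⟪u, x imax⟫ :=
        le_antisymm (hmax _ hi2) (by rw [heqm]; exact hmin _ hi2)
      rw [e1, e2]
    have hsplit : vertsOf x τ.1 = M τ ∪ {imax, imin} := by
      ext i
      simp only [hMdef, Finset.mem_union, Finset.mem_filter, Finset.mem_insert,
        Finset.mem_singleton]
      constructor
      · intro hi
        by_cases hcnd : (∃ j ∈ vertsOf x τ.1, ⟪u, x j⟫ < ⟪u, x i⟫) ∧
            (∃ j ∈ vertsOf x τ.1, ⟪u, x i⟫ < ⟪u, x j⟫)
        · exact Or.inl ⟨hi, hcnd⟩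
        · right
          rcases not_and_or.1 hcnd with h' | h'
          · push_neg at h'
            right
            apply hvalinj
            exact le_antisymm (h' imin hminmem) (hmin _ hi)
          · push_neg at h'
            left
            apply hvalinj
            exact le_antisymm (hmax _ hi) (h' imax hmaxmem)
      · intro h
        rcases h with ⟨hi, -⟩ | h
        · exact hi
        · rcases h with rfl | rfl
          · exact hmaxmem
          · exact hminmem
    have hdisj : Disjoint (M τ) {imax, imin} := by
      rw [Finset.disjoint_left]
      intro i hiM hi2
      simp only [Finset.mem_insert, Finset.mem_singleton] at hi2
      simp only [hMdef, Finset.mem_filter] at hiM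
      obtain ⟨hiv, ⟨jb, hjb, hjb'⟩, ⟨ja, hja, hja'⟩⟩ := hiM
      rcases hi2 with rfl | rfl
      · exact absurd (hmax ja hja) (not_le.2 hja')
      · exact absurd (hmin jb hjb) (not_le.2 hjb')
    rw [hsplit, Finset.card_union_of_disjoint hdisj,
      Finset.card_insert_of_notMem (by simp [hneq]), Finset.card_singleton]
  have hMsub : ∀ (τ : FacetT V x) (i : Fin V), i ∈ M τ → Crossing u x i τ.1 := by
    intro τ i hi
    simp only [hMdef, Finset.mem_filter] at hi
    obtain ⟨hiv, ⟨jb, hjb, hjb'⟩, ⟨ja, hja, hja'⟩⟩ := hi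
    exact ⟨mem_vertsOf.1 hiv, ⟨ja, mem_vertsOf.1 hja, hja'⟩,
      ⟨jb, mem_vertsOf.1 hjb, hjb'⟩⟩
  -- crucial geometric bound: every vertex is crossing for at most 2 facets
  have hkey : ∀ i : Fin V,
      ((Finset.univ : Finset (FacetT V x)).filter (fun τ => i ∈ M τ)).card ≤ 2 := by
    intro i
    by_contra hgt
    push_neg at hgt
    obtain ⟨t3, ht3sub, ht3card⟩ := Finset.exists_subset_card_eq
      (show 3 ≤ ((Finset.univ : Finset (FacetT V x)).filter (fun τ => i ∈ M τ)).card
        from by omega)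
    obtain ⟨τ1, τ2, τ3, h12, h13, h23, rfl⟩ := Finset.card_eq_three.1 ht3card
    have hm1 : i ∈ M τ1 := (Finset.mem_filter.1 (ht3sub (by simp))).2
    have hm2 : i ∈ M τ2 := (Finset.mem_filter.1 (ht3sub (by simp))).2
    have hm3 : i ∈ M τ3 := (Finset.mem_filter.1 (ht3sub (by simp))).2
    exact no_three_cross hinj hvert hu hVge τ1.2 τ2.2 τ3.2
      (fun h => h12 (Subtype.ext h)) (fun h => h13 (Subtype.ext h))
      (fun h => h23 (Subtype.ext h))
      (hMsub τ1 i hm1) (hMsub τ2 i hm2) (hMsub τ3 i hm3)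
  -- double counting
  have hfiltM : ∀ τ : FacetT V x, Finset.univ.filter (fun i => i ∈ M τ) = M τ := by
    intro τ; ext i; simp
  have hswapN : ∑ τ : FacetT V x, (M τ).card =
      ∑ i : Fin V, ((Finset.univ : Finset (FacetT V x)).filter (fun τ => i ∈ M τ)).card := by
    calc ∑ τ : FacetT V x, (M τ).card
        = ∑ τ : FacetT V x, ∑ i : Fin V, (if i ∈ M τ then 1 else 0) := by
          refine Finset.sum_congr rfl (fun τ _ => ?_)
          conv_lhs => rw [← hfiltM τ]
          rw [Finset.card_filter]
      _ = ∑ i : Fin V, ∑ τ : FacetT V x, (if i ∈ M τ then 1 else 0) := Finset.sum_comm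
      _ = ∑ i : Fin V, ((Finset.univ : Finset (FacetT V x)).filter
            (fun τ => i ∈ M τ)).card := by
          refine Finset.sum_congr rfl (fun i _ => ?_)
          rw [Finset.card_filter]
  have hVne : (Finset.univ : Finset (Fin V)).Nonempty := ⟨⟨0, by omega⟩, Finset.mem_univ _⟩
  obtain ⟨gmax, -, hgmax⟩ := Finset.exists_max_image Finset.univ (fun i => ⟪u, x i⟫) hVne
  obtain ⟨gmin, -, hgmin⟩ := Finset.exists_min_image Finset.univ (fun i => ⟪u, x i⟫) hVne
  have hgmaxM : ∀ τ : FacetT V x, gmax ∉ M τ := by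
    intro τ hmem
    simp only [hMdef, Finset.mem_filter] at hmem
    obtain ⟨-, -, ⟨ja, hja, hja'⟩⟩ := hmem
    exact absurd (hgmax ja (Finset.mem_univ ja)) (not_le.2 hja')
  have hgminM : ∀ τ : FacetT V x, gmin ∉ M τ := by
    intro τ hmem
    simp only [hMdef, Finset.mem_filter] at hmem
    obtain ⟨-, ⟨jb, hjb, hjb'⟩, -⟩ := hmem
    exact absurd (hgmin jb (Finset.mem_univ jb)) (not_le.2 hjb')
  have hgne : gmax ≠ gmin := by
    intro heqg
    have h01 : (⟨0, by omega⟩ : Fin V) ≠ ⟨1, by omega⟩ := by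
      intro h
      have h' : (0:ℕ) = 1 := by simpa using congrArg Fin.val h
      omega
    apply hu _ _ h01
    have e1 := le_antisymm (hgmax ⟨0, by omega⟩ (Finset.mem_univ _))
      (by rw [heqg]; exact hgmin ⟨0, by omega⟩ (Finset.mem_univ _))
    have e2 := le_antisymm (hgmax ⟨1, by omega⟩ (Finset.mem_univ _))
      (by rw [heqg]; exact hgmin ⟨1, by omega⟩ (Finset.mem_univ _))
    rw [e1, e2]
  have hsum_i : ∑ i : Fin V, ((Finset.univ : Finset (FacetT V x)).filter
      (fun τ => i ∈ M τ)).card ≤ 2 * V - 4 := by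
    have hzero : ∑ i ∈ ({gmax, gmin} : Finset (Fin V)),
        ((Finset.univ : Finset (FacetT V x)).filter (fun τ => i ∈ M τ)).card = 0 := by
      rw [Finset.sum_insert (by simpa using hgne), Finset.sum_singleton]
      have h1 : (Finset.univ : Finset (FacetT V x)).filter (fun τ => gmax ∈ M τ) = ∅ :=
        Finset.filter_eq_empty_iff.2 (fun τ _ => hgmaxM τ)
      have h2 : (Finset.univ : Finset (FacetT V x)).filter (fun τ => gmin ∈ M τ) = ∅ :=
        Finset.filter_eq_empty_iff.2 (fun τ _ => hgminM τ)
      rw [h1, h2]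
      simp
    have hsplit' : ∑ i ∈ Finset.univ \ ({gmax, gmin} : Finset (Fin V)),
        ((Finset.univ : Finset (FacetT V x)).filter (fun τ => i ∈ M τ)).card +
        ∑ i ∈ ({gmax, gmin} : Finset (Fin V)),
        ((Finset.univ : Finset (FacetT V x)).filter (fun τ => i ∈ M τ)).card =
        ∑ i : Fin V, ((Finset.univ : Finset (FacetT V x)).filter (fun τ => i ∈ M τ)).card :=
      Finset.sum_sdiff (f := fun i => ((Finset.univ : Finset (FacetT V x)).filter
        (fun τ => i ∈ M τ)).card) (Finset.subset_univ ({gmax, gmin} : Finset (Fin V)))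
    have hcard2 : ({gmax, gmin} : Finset (Fin V)).card = 2 := by
      rw [Finset.card_insert_of_notMem (by simpa using hgne), Finset.card_singleton]
    have hbtw : ∑ i ∈ Finset.univ \ ({gmax, gmin} : Finset (Fin V)),
        ((Finset.univ : Finset (FacetT V x)).filter (fun τ => i ∈ M τ)).card
        ≤ 2 * (V - 2) := by
      calc ∑ i ∈ Finset.univ \ ({gmax, gmin} : Finset (Fin V)),
          ((Finset.univ : Finset (FacetT V x)).filter (fun τ => i ∈ M τ)).card
          ≤ ∑ _i ∈ Finset.univ \ ({gmax, gmin} : Finset (Fin V)), 2 :=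
            Finset.sum_le_sum (fun i _ => hkey i)
        _ = (Finset.univ \ ({gmax, gmin} : Finset (Fin V))).card * 2 := by
            rw [Finset.sum_const, smul_eq_mul]
        _ = (V - 2) * 2 := by
            rw [Finset.card_sdiff_of_subset (Finset.subset_univ _), Finset.card_univ,
              Fintype.card_fin, hcard2]
        _ = 2 * (V - 2) := by ring
    omega
  have hKsum : ∑ τ : FacetT V x, (vertsOf x τ.1).card =
      (∑ τ : FacetT V x, (M τ).card) + 2 * Fintype.card (FacetT V x) := by
    calc ∑ τ : FacetT V x, (vertsOf x τ.1).card
        = ∑ τ : FacetT V x, ((M τ).card + 2) :=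
          Finset.sum_congr rfl (fun τ _ => hMcard τ)
      _ = (∑ τ : FacetT V x, (M τ).card) + 2 * Fintype.card (FacetT V x) := by
          rw [Finset.sum_add_distrib, Finset.sum_const, Finset.card_univ, smul_eq_mul,
            mul_comm]
  have hIncidence : ∑ τ : FacetT V x, (vertsOf x τ.1).card + 4 ≤
      2 * V + 2 * Fintype.card (FacetT V x) := by
    have h1 : ∑ τ : FacetT V x, (M τ).card ≤ 2 * V - 4 := by
      rw [hswapN]; exact hsum_i
    omega
  -- the admissible subspace
  set τ₀ : FacetT V x := ⟨G₀, hG₀⟩ with hτ₀def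
  set Fset : Finset (FacetT V x) :=
    Finset.univ.filter (fun τ => θ ∉ vectorSpan ℝ τ.1) with hFsetdef
  have hτ₀not : τ₀ ∉ Fset := by
    simp only [hFsetdef, Finset.mem_filter, Finset.mem_univ, true_and, not_not]
    exact hθmem
  have hFsub : Fset ⊆ Finset.univ.erase τ₀ := by
    intro τ hτ
    rw [Finset.mem_erase]
    refine ⟨?_, Finset.mem_univ τ⟩
    intro heqτ
    rw [heqτ] at hτ
    exact hτ₀not hτ
  have hSfin : ∀ τ : FacetT V x,
      (V:ℤ) - (vertsOf x τ.1).card + 3 ≤ finrank ℝ (SMod x (vertsOf x τ.1)) := by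
    intro τ
    apply finrank_SMod
    rw [← image_vertsOf (x := x) τ.1, facet_vectorSpan hvert τ.2]
    exact τ.2.2.2.2
  have hinf := finrank_inf_ge Fset (fun τ => SMod x (vertsOf x τ.1))
    (fun τ => ((vertsOf x τ.1).card : ℤ) - 3) (fun τ _ => by
      have h := hSfin τ
      show (V:ℤ) - (((vertsOf x τ.1).card : ℤ) - 3) ≤
        ((finrank ℝ (SMod x (vertsOf x τ.1))) : ℤ)
      omega)
  have hK3 : ∀ τ : FacetT V x, 3 ≤ (vertsOf x τ.1).card :=
    fun τ => three_le_verts hinj hvert τ.2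
  have hsum_sub : ∑ τ ∈ Fset, (((vertsOf x τ.1).card : ℤ) - 3) ≤
      ∑ τ ∈ Finset.univ.erase τ₀, (((vertsOf x τ.1).card : ℤ) - 3) :=
    Finset.sum_le_sum_of_subset_of_nonneg hFsub (fun τ _ _ => by
      have h := hK3 τ
      omega)
  have herase : ∑ τ ∈ Finset.univ.erase τ₀, (((vertsOf x τ.1).card : ℤ) - 3)
      = (∑ τ : FacetT V x, (((vertsOf x τ.1).card : ℤ) - 3)) - ((Δ:ℤ) - 3) := by
    have h' : ∑ τ ∈ Finset.univ.erase τ₀, (((vertsOf x τ.1).card : ℤ) - 3) +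
        (((vertsOf x τ₀.1).card : ℤ) - 3) =
        ∑ τ : FacetT V x, (((vertsOf x τ.1).card : ℤ) - 3) :=
      Finset.sum_erase_add Finset.univ _ (Finset.mem_univ τ₀)
    have hτ₀K : ((vertsOf x τ₀.1).card : ℤ) = (Δ:ℤ) := by
      show ((vertsOf x G₀).card : ℤ) = (Δ:ℤ)
      exact_mod_cast hΔverts
    linarith [h', hτ₀K]
  have htotal : ∑ τ : FacetT V x, (((vertsOf x τ.1).card : ℤ) - 3)
      = (∑ τ : FacetT V x, ((vertsOf x τ.1).card : ℤ)) - 3 * (Fintype.card (FacetT V x)) := by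
    rw [Finset.sum_sub_distrib, Finset.sum_const, Finset.card_univ]
    push_cast
    ring
  have hIncZ : (∑ τ : FacetT V x, ((vertsOf x τ.1).card : ℤ)) + 4 ≤
      2 * V + 2 * Fintype.card (FacetT V x) := by
    exact_mod_cast hIncidence
  have hbig' : (V:ℤ) - (Fintype.card (FacetT V x) : ℤ) + 3 < (Δ:ℤ) := by
    rw [hcard_eq] at hbig
    exact hbig
  have hinf' : (V:ℤ) - ∑ τ ∈ Fset, (((vertsOf x τ.1).card : ℤ) - 3) ≤
      finrank ℝ ((Fset.inf (fun τ => SMod x (vertsOf x τ.1))) :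
        Submodule ℝ (Fin V → ℝ)) := hinf
  have hFset_sum : ∑ τ ∈ Fset, (((vertsOf x τ.1).card : ℤ) - 3) ≤ (V:ℤ) - 5 := by
    omega
  have hA5 : (5:ℤ) ≤ finrank ℝ ((Fset.inf (fun τ => SMod x (vertsOf x τ.1))) :
      Submodule ℝ (Fin V → ℝ)) := by
    omega
  have hAff4 : finrank ℝ (LinearMap.range (affEval x)) ≤ 4 := by
    have h1 := LinearMap.finrank_range_le (affEval x)
    have h2 : finrank ℝ (E3 × ℝ) = 4 := by
      rw [Module.finrank_prod]
      simp
    omega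
  have hnotle : ¬ ((Fset.inf (fun τ => SMod x (vertsOf x τ.1))) ≤
      LinearMap.range (affEval x)) := by
    intro hle
    have h := Submodule.finrank_mono hle
    omega
  obtain ⟨α, hαA, hαAff⟩ := SetLike.not_le_iff_exists.1 hnotle
  refine ⟨θ, hθnorm, α, ?_, ?_⟩
  · intro F hF hθF
    have hmemF : (⟨F, hF⟩ : FacetT V x) ∈ Fset := by
      simp only [hFsetdef, Finset.mem_filter, Finset.mem_univ, true_and]
      exact Finset.mem_filter.2 ⟨Finset.mem_univ (α := FacetT V x) _, hθF⟩
    have hle := Finset.inf_le (f := fun τ : FacetT V x => SMod x (vertsOf x τ.1)) hmemF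
    have hmem := hle hαA
    rw [mem_SMod] at hmem
    obtain ⟨w, β, hw⟩ := hmem
    exact ⟨w, β, fun i hi => hw i (mem_vertsOf.2 hi)⟩
  · rintro ⟨w, β, hall⟩
    apply hαAff
    rw [LinearMap.mem_range]
    exact ⟨(w, β), funext fun i => by rw [affEval_apply]; exact (hall i).symm⟩

end

end NAL

/-- if `Δ(P) > V(P) − F(P) + 3`, then for a suitable unit direction `θ` there is a
`θ`-admissible speed which is not globally affine. -/
theorem nontrivial_admissible_of_large_facet (V : ℕ) (x : Fin V → EuclideanSpace ℝ (Fin 3))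
    (hinj : Function.Injective x)
    (hvert : Set.extremePoints ℝ (convexHull ℝ (Set.range x)) = Set.range x)
    (hfull : (interior (convexHull ℝ (Set.range x))).Nonempty)
    (Δ : ℕ)
    (hΔex : ∃ G₀, IsFacet3 (convexHull ℝ (Set.range x)) G₀ ∧
      Nat.card (G₀ ∩ Set.range x : Set _) = Δ)
    (hΔmax : ∀ F, IsFacet3 (convexHull ℝ (Set.range x)) F →
      Nat.card (F ∩ Set.range x : Set _) ≤ Δ)
    (hbig : (V : ℤ) - (Nat.card {F : Set (EuclideanSpace ℝ (Fin 3)) //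
        IsFacet3 (convexHull ℝ (Set.range x)) F} : ℤ) + 3 < (Δ : ℤ)) :
    ∃ θ : EuclideanSpace ℝ (Fin 3), ‖θ‖ = 1 ∧
      ∃ α : Fin V → ℝ, IsAdmissible V x θ α ∧
        ¬ ∃ (w : EuclideanSpace ℝ (Fin 3)) (β : ℝ), ∀ i, α i = (inner ℝ w (x i) : ℝ) + β := by
  exact NAL.main_aux V x hinj hvert Δ hΔex hbig
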